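/- Let (a',b) be a loop-digraphic list of n pairs and let (a,b) be a list with a nonincreasing, Σa_i = Σa'_i, and a ≺ a'. Then (a,b) is a loop-digraphic list. Equivalently, if (a',b) is realizable as a bipartite degree pair and a ≺ a' with a nonincreasing, then (a,b) is realizable as a bipartite degree pair. -/
import Mathlib


open Finset

/-- Partial sum of the first `k` entries of `a`. -/
def partSum {n : ℕ} (a : Fin n → ℕ) (k : ℕ) : ℕ :=
  ∑ i : Fin n, if (i : ℕ) < k then a i else 0

/-- `a ≺ a'` : `a` is majorized by `a'`. -/
def Majorized {n : ℕ} (a a' : Fin n → ℕ) : Prop :=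
  (∀ k : ℕ, partSum a k ≤ partSum a' k) ∧ ∑ i, a i = ∑ i, a' i

/-- `a` is nonincreasing. -/
def Nonincreasing {n : ℕ} (a : Fin n → ℕ) : Prop :=
  ∀ i j : Fin n, i ≤ j → a j ≤ a i

/-- `b` is nondecreasing. -/
def Nondecreasing {n : ℕ} (b : Fin n → ℕ) : Prop :=
  ∀ i j : Fin n, i ≤ j → b i ≤ b j

/-- `a` is obtained from `a'` by a unit `(i,j)`-transfer. -/
def UnitTransfer {n : ℕ} (a' a : Fin n → ℕ) (i j : Fin n) : Prop :=
  i < j ∧ a' j + 2 ≤ a' i ∧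
  a = Function.update (Function.update a' i (a' i - 1)) j (a' j + 1)

/-- Row sum of a 0-1 matrix. -/
def rowSum {n : ℕ} (M : Fin n → Fin n → Bool) (i : Fin n) : ℕ :=
  ∑ j, if M i j then 1 else 0

/-- Column sum of a 0-1 matrix. -/
def colSum {n : ℕ} (M : Fin n → Fin n → Bool) (j : Fin n) : ℕ :=
  ∑ i, if M i j then 1 else 0

/-- Number of loop-digraph realizations of `(a,b)`:
`n×n` 0-1 matrices with row sums `b` and column sums `a`. -/
noncomputable def N1 {n : ℕ} (a b : Fin n → ℕ) : ℕ :=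
  Nat.card {M : Fin n → Fin n → Bool //
    (∀ i, rowSum M i = b i) ∧ (∀ j, colSum M j = a j)}

def LoopDigraphic {n : ℕ} (a b : Fin n → ℕ) : Prop := 0 < N1 a b

/-- Number of digraph realizations of `(a,b)`:
`n×n` 0-1 matrices with zero diagonal, row sums `b` and column sums `a`. -/
noncomputable def N2 {n : ℕ} (a b : Fin n → ℕ) : ℕ :=
  Nat.card {M : Fin n → Fin n → Bool //
    (∀ i, M i i = false) ∧ (∀ i, rowSum M i = b i) ∧ (∀ j, colSum M j = a j)}

def Digraphic {n : ℕ} (a b : Fin n → ℕ) : Prop := 0 < N2 a b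

/-- Number of simple graph realizations of `a` (symmetric 0-1 adjacency matrices
with zero diagonal and degrees `a`). -/
noncomputable def N3 {n : ℕ} (a : Fin n → ℕ) : ℕ :=
  Nat.card {M : Fin n → Fin n → Bool //
    (∀ i j, M i j = M j i) ∧ (∀ i, M i i = false) ∧ (∀ i, rowSum M i = a i)}

def Graphic {n : ℕ} (a : Fin n → ℕ) : Prop := 0 < N3 a

/-- The minconvex list for parameters `n, m`. -/
def minconvex (n m : ℕ) : Fin n → ℕ :=
  fun i => if (i : ℕ) < m % n then m / n + 1 else m / n

/-- `(a,b)` is lexicographically nonincreasing. -/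
def LexNonincreasing {n : ℕ} (a b : Fin n → ℕ) : Prop :=
  ∀ i j : Fin n, i ≤ j → (a j < a i ∨ (a i = a j ∧ b j ≤ b i))


lemma loopDigraphic_iff {n : ℕ} (a b : Fin n → ℕ) :
    LoopDigraphic a b ↔ ∃ M : Fin n → Fin n → Bool,
      (∀ i, rowSum M i = b i) ∧ (∀ j, colSum M j = a j) := by
  unfold LoopDigraphic N1
  rw [Nat.card_pos_iff]
  constructor
  · rintro ⟨⟨M, h⟩, -⟩; exact ⟨M, h⟩
  · rintro ⟨M, h⟩; exact ⟨⟨⟨M, h⟩⟩, inferInstance⟩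

lemma transfer_step {n : ℕ} (b c : Fin n → ℕ) (i j : Fin n) (hij : i ≠ j)
    (hlt : c j < c i) (h : LoopDigraphic c b) :
    LoopDigraphic (Function.update (Function.update c i (c i - 1)) j (c j + 1)) b := by
  classical
  rw [loopDigraphic_iff] at h ⊢
  obtain ⟨M, hrow, hcol⟩ := h
  have hex : ∃ r, M r i = true ∧ M r j = false := by
    by_contra hcon
    push_neg at hcon
    have hle : colSum M i ≤ colSum M j := by
      apply Finset.sum_le_sum
      intro r _
      by_cases hri : M r i = true
      · have h2 : M r j = true := by simpa using hcon r hri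
        simp [hri, h2]
      · have h2 : M r i = false := by simpa using hri
        simp [h2]
    rw [hcol i, hcol j] at hle; omega
  obtain ⟨r, hri, hrj⟩ := hex
  set R : Fin n → Bool := Function.update (Function.update (M r) i false) j true with hR
  have hRi : R i = false := by
    rw [hR, Function.update_of_ne hij, Function.update_self]
  have hRj : R j = true := by
    rw [hR, Function.update_self]
  have hRt : ∀ t, t ≠ i → t ≠ j → R t = M r t := by
    intro t hti htj
    rw [hR, Function.update_of_ne htj, Function.update_of_ne hti]
  refine ⟨Function.update M r R, ?_, ?_⟩
  · intro r'
    by_cases hr' : r' = r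
    · rw [hr']
      unfold rowSum
      have key : ∀ t, (if (Function.update M r R) r t then (1:ℕ) else 0)
          = if M r (Equiv.swap i j t) then 1 else 0 := by
        intro t
        rw [Function.update_self]
        rcases eq_or_ne t i with hti | hti
        · rw [hti, Equiv.swap_apply_left, hRi, hrj]
        · rcases eq_or_ne t j with htj | htj
          · rw [htj, Equiv.swap_apply_right, hRj, hri]
          · rw [Equiv.swap_apply_of_ne_of_ne hti htj, hRt t hti htj]
      calc ∑ t, (if (Function.update M r R) r t then (1:ℕ) else 0)
          = ∑ t, (if M r (Equiv.swap i j t) then (1:ℕ) else 0) :=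
            Finset.sum_congr rfl fun t _ => key t
        _ = ∑ t, (if M r t then (1:ℕ) else 0) :=
            Equiv.sum_comp (Equiv.swap i j) (fun t => if M r t then (1:ℕ) else 0)
        _ = b r := hrow r
    · unfold rowSum
      rw [Function.update_of_ne hr']
      exact hrow r'
  · intro t
    rcases eq_or_ne t j with htj | htj
    · rw [htj, Function.update_self]
      have hfun : (fun r' => if (Function.update M r R) r' j then (1:ℕ) else 0)
          = Function.update (fun r' => if M r' j then (1:ℕ) else 0) r 1 := by
        funext r'
        rcases eq_or_ne r' r with h | h
        · rw [h, Function.update_self, Function.update_self, hRj]; simp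
        · rw [Function.update_of_ne h, Function.update_of_ne h]
      have horig : ∑ r', (if M r' j then (1:ℕ) else 0)
          = (if M r j then (1:ℕ) else 0)
            + ∑ r' ∈ univ \ {r}, (if M r' j then (1:ℕ) else 0) :=
        Finset.sum_eq_add_sum_sdiff_singleton_of_mem (Finset.mem_univ r) _
      rw [hrj, if_neg Bool.false_ne_true] at horig
      have hc := hcol j
      unfold colSum at hc ⊢
      rw [hfun, Finset.sum_update_of_mem (Finset.mem_univ r)]
      rw [horig] at hc
      omega
    · rcases eq_or_ne t i with hti | hti
      · rw [hti, Function.update_of_ne hij, Function.update_self]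
        have hfun : (fun r' => if (Function.update M r R) r' i then (1:ℕ) else 0)
            = Function.update (fun r' => if M r' i then (1:ℕ) else 0) r 0 := by
          funext r'
          rcases eq_or_ne r' r with h | h
          · rw [h, Function.update_self, Function.update_self, hRi]; simp
          · rw [Function.update_of_ne h, Function.update_of_ne h]
        have horig : ∑ r', (if M r' i then (1:ℕ) else 0)
            = (if M r i then (1:ℕ) else 0)
              + ∑ r' ∈ univ \ {r}, (if M r' i then (1:ℕ) else 0) :=
          Finset.sum_eq_add_sum_sdiff_singleton_of_mem (Finset.mem_univ r) _
        rw [hri, if_pos rfl] at horig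
        have hc := hcol i
        unfold colSum at hc ⊢
        rw [hfun, Finset.sum_update_of_mem (Finset.mem_univ r)]
        rw [horig] at hc
        omega
      · rw [Function.update_of_ne htj, Function.update_of_ne hti]
        have hfun : ∀ r', (Function.update M r R) r' t = M r' t := by
          intro r'
          rcases eq_or_ne r' r with h | h
          · rw [h, Function.update_self, hRt t hti htj]
          · rw [Function.update_of_ne h]
        unfold colSum
        simp only [hfun]
        exact hcol t

lemma partSum_add {n : ℕ} (f g : Fin n → ℕ) (k : ℕ) :
    partSum (fun t => f t + g t) k = partSum f k + partSum g k := by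
  unfold partSum
  rw [← Finset.sum_add_distrib]
  apply Finset.sum_congr rfl
  intro t _
  split_ifs <;> simp

lemma partSum_single {n : ℕ} (i : Fin n) (k : ℕ) :
    partSum (fun t => if t = i then 1 else 0) k = if (i : ℕ) < k then 1 else 0 := by
  have key : ∀ t : Fin n, (if (t : ℕ) < k then (if t = i then (1:ℕ) else 0) else 0)
      = if t = i then (if (i : ℕ) < k then (1:ℕ) else 0) else 0 := by
    intro t
    rcases eq_or_ne t i with rfl | h
    · simp
    · simp [h]
  unfold partSum
  rw [Finset.sum_congr rfl fun t _ => key t, Finset.sum_ite_eq' univ i]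
  simp

lemma partSum_succ {n : ℕ} (f : Fin n → ℕ) (k : ℕ) (hk : k < n) :
    partSum f (k + 1) = partSum f k + f ⟨k, hk⟩ := by
  have key : ∀ t : Fin n, (if (t : ℕ) < k + 1 then f t else 0)
      = (if (t : ℕ) < k then f t else 0) + (if t = (⟨k, hk⟩ : Fin n) then f t else 0) := by
    intro t
    by_cases h2 : t = (⟨k, hk⟩ : Fin n)
    · subst h2; simp
    · have h3 : (t : ℕ) ≠ k := fun h => h2 (Fin.ext h)
      rw [if_neg h2, add_zero]
      by_cases h1 : (t : ℕ) < k
      · rw [if_pos (by omega), if_pos h1]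
      · rw [if_neg (by omega), if_neg h1]
  unfold partSum
  rw [Finset.sum_congr rfl fun t _ => key t, Finset.sum_add_distrib,
    Finset.sum_ite_eq' univ]
  simp

lemma partSum_total {n : ℕ} (f : Fin n → ℕ) {m : ℕ} (h : n ≤ m) :
    partSum f m = ∑ t, f t := by
  unfold partSum
  apply Finset.sum_congr rfl
  intro t _
  rw [if_pos (lt_of_lt_of_le t.isLt h)]

lemma eq_of_partSum {n : ℕ} (f g : Fin n → ℕ) (h : ∀ k, partSum f k = partSum g k) :
    f = g := by
  funext t
  have h2 := h ((t : ℕ) + 1)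
  rw [partSum_succ f (t : ℕ) t.isLt, partSum_succ g (t : ℕ) t.isLt, h (t : ℕ)] at h2
  simpa using h2

lemma partSum_transfer {n : ℕ} (c : Fin n → ℕ) (i j : Fin n) (hlt : c j < c i) (k : ℕ) :
    partSum (Function.update (Function.update c i (c i - 1)) j (c j + 1)) k
      + (if (i : ℕ) < k then 1 else 0)
    = partSum c k + (if (j : ℕ) < k then 1 else 0) := by
  have hij : i ≠ j := by rintro rfl; omega
  set c' := Function.update (Function.update c i (c i - 1)) j (c j + 1) with hc'
  have h1 : (fun t => c' t + (if t = i then 1 else 0))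
      = (fun t => c t + (if t = j then 1 else 0)) := by
    funext t
    rcases eq_or_ne t i with rfl | hti
    · rw [hc', Function.update_of_ne hij, Function.update_self, if_pos rfl,
        if_neg hij]
      omega
    · rcases eq_or_ne t j with rfl | htj
      · rw [hc', Function.update_self, if_neg hti, if_pos rfl]
      · rw [hc', Function.update_of_ne htj, Function.update_of_ne hti,
          if_neg hti, if_neg htj]
  calc partSum c' k + (if (i : ℕ) < k then 1 else 0)
      = partSum c' k + partSum (fun t => if t = i then 1 else 0) k := by
        rw [partSum_single]
    _ = partSum (fun t => c' t + (if t = i then 1 else 0)) k := (partSum_add _ _ _).symm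
    _ = partSum (fun t => c t + (if t = j then 1 else 0)) k := by rw [h1]
    _ = partSum c k + partSum (fun t => if t = j then 1 else 0) k := partSum_add _ _ _
    _ = partSum c k + (if (j : ℕ) < k then 1 else 0) := by rw [partSum_single]

lemma reduce {n : ℕ} (b a : Fin n → ℕ) (hmono : Nonincreasing a) :
    ∀ (d : ℕ) (c : Fin n → ℕ),
      (∑ k ∈ Finset.range (n + 1), (partSum c k - partSum a k)) ≤ d →
      (∀ k, partSum a k ≤ partSum c k) → ∑ t, c t = ∑ t, a t →
      LoopDigraphic c b → LoopDigraphic a b := by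
  intro d
  induction d with
  | zero =>
    intro c hD hle hsum hc
    have hall : ∀ k, partSum c k ≤ partSum a k := by
      intro k
      rcases le_or_gt k n with hk | hk
      · have hmem : k ∈ Finset.range (n + 1) := by simp; omega
        have hz := Finset.sum_eq_zero_iff.mp (Nat.le_zero.mp hD) k hmem
        omega
      · rw [partSum_total c (by omega), partSum_total a (by omega), hsum]
    have hca : c = a := eq_of_partSum _ _ fun k => le_antisymm (hall k) (hle k)
    rwa [hca] at hc
  | succ d ih =>
    intro c hD hle hsum hc
    by_cases hall : ∀ k, partSum c k ≤ partSum a k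
    · have hca : c = a := eq_of_partSum _ _ fun k => le_antisymm (hall k) (hle k)
      rwa [hca] at hc
    · push_neg at hall
      have hk0ex : ∃ k, partSum a k < partSum c k := by
        obtain ⟨k, hk⟩ := hall
        exact ⟨k, by have := hle k; omega⟩
      classical
      set k0 := Nat.find hk0ex with hk0def
      have hk0 : partSum a k0 < partSum c k0 := Nat.find_spec hk0ex
      have hk0min : ∀ k, k < k0 → ¬ partSum a k < partSum c k :=
        fun k hk => Nat.find_min hk0ex hk
      have hk0pos : 0 < k0 := by
        rcases Nat.eq_zero_or_pos k0 with h | h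
        · exfalso
          have h2 := hk0
          rw [h] at h2
          simp [partSum] at h2
        · exact h
      have hk0n : k0 < n := by
        by_contra h
        push_neg at h
        have h2 := hk0
        rw [partSum_total a h, partSum_total c h, hsum] at h2
        omega
      have hm0ex : ∃ m, k0 ≤ m ∧ partSum a m = partSum c m :=
        ⟨n, le_of_lt hk0n, by rw [partSum_total a le_rfl, partSum_total c le_rfl, hsum]⟩
      set m0 := Nat.find hm0ex with hm0def
      have hm0 : k0 ≤ m0 ∧ partSum a m0 = partSum c m0 := Nat.find_spec hm0ex
      have hm0min : ∀ m, m < m0 → ¬ (k0 ≤ m ∧ partSum a m = partSum c m) :=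
        fun m hm => Nat.find_min hm0ex hm
      have hm0n : m0 ≤ n := Nat.find_min' hm0ex
        ⟨le_of_lt hk0n, by rw [partSum_total a le_rfl, partSum_total c le_rfl, hsum]⟩
      have hstrict : ∀ k, k0 ≤ k → k < m0 → partSum a k < partSum c k := by
        intro k h1 h2
        have h3 : ¬ partSum a k = partSum c k := fun he => (hm0min k h2) ⟨h1, he⟩
        have h4 := hle k
        omega
      have hk0m0 : k0 < m0 := by
        rcases eq_or_lt_of_le hm0.1 with h | h
        · exfalso; rw [← h] at hm0; omega
        · exact h
      have hi : k0 - 1 < n := by omega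
      have hj : m0 - 1 < n := by omega
      set i : Fin n := ⟨k0 - 1, hi⟩ with hidef
      set j : Fin n := ⟨m0 - 1, hj⟩ with hjdef
      have hival : (i : ℕ) = k0 - 1 := rfl
      have hjval : (j : ℕ) = m0 - 1 := rfl
      have hci : a i < c i := by
        have e1 := partSum_succ a (k0 - 1) hi
        have e2 := partSum_succ c (k0 - 1) hi
        rw [← hidef] at e1 e2
        have h3 := hle (k0 - 1)
        have h4 : ¬ partSum a (k0 - 1) < partSum c (k0 - 1) := hk0min _ (by omega)
        have hk0' : k0 - 1 + 1 = k0 := by omega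
        rw [hk0'] at e1 e2
        omega
      have hcj : c j < a j := by
        have e1 := partSum_succ a (m0 - 1) hj
        have e2 := partSum_succ c (m0 - 1) hj
        rw [← hjdef] at e1 e2
        have h3 := hstrict (m0 - 1) (by omega) (by omega)
        have h4 := hm0.2
        have hm0' : m0 - 1 + 1 = m0 := by omega
        rw [hm0'] at e1 e2
        omega
      have hijle : i ≤ j := by
        rw [Fin.le_def]; omega
      have hcc : c j < c i := by
        have := hmono i j hijle
        omega
      have hij : i ≠ j := by
        intro h
        rw [h] at hcc
        omega
      set c' := Function.update (Function.update c i (c i - 1)) j (c j + 1) with hcdef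
      have hc'd : LoopDigraphic c' b := transfer_step b c i j hij hcc hc
      have hPS : ∀ k, partSum c' k + (if (i : ℕ) < k then 1 else 0)
          = partSum c k + (if (j : ℕ) < k then 1 else 0) :=
        fun k => partSum_transfer c i j hcc k
      have hle' : ∀ k, partSum a k ≤ partSum c' k := by
        intro k
        have h1 := hPS k
        by_cases h2 : (i : ℕ) < k
        · by_cases h3 : (j : ℕ) < k
          · rw [if_pos h2, if_pos h3] at h1
            have := hle k; omega
          · rw [if_pos h2, if_neg h3] at h1
            have h4 := hstrict k (by omega) (by omega)
            omega
        · have h3 : ¬ (j : ℕ) < k := by omega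
          rw [if_neg h2, if_neg h3] at h1
          have := hle k; omega
      have hsum' : ∑ t, c' t = ∑ t, a t := by
        have h1 := hPS n
        rw [partSum_total c' le_rfl, partSum_total c le_rfl,
          if_pos (show (i:ℕ) < n from hi), if_pos (show (j:ℕ) < n from hj)] at h1
        omega
      have hD' : ∑ k ∈ Finset.range (n + 1), (partSum c' k - partSum a k)
          < ∑ k ∈ Finset.range (n + 1), (partSum c k - partSum a k) := by
        apply Finset.sum_lt_sum
        · intro k _
          have h1 := hPS k
          have h2 : partSum c' k ≤ partSum c k := by
            by_cases hik : (i : ℕ) < k <;> by_cases hjk : (j : ℕ) < k <;>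
              simp only [if_pos, if_neg, hik, hjk, if_true, if_false] at h1 <;> omega
          omega
        · refine ⟨k0, by simp; omega, ?_⟩
          have h1 := hPS k0
          have hik : (i : ℕ) < k0 := by omega
          have hjk : ¬ (j : ℕ) < k0 := by omega
          rw [if_pos hik, if_neg hjk] at h1
          have h2 := hle' k0
          omega
      exact ih c' (by omega) hle' hsum' hc'd

theorem stmt4 {n : ℕ} (a a' b : Fin n → ℕ)
    (hd : LoopDigraphic a' b) (hmono : Nonincreasing a)
    (hsum : ∑ i, a i = ∑ i, a' i) (hmaj : Majorized a a') :
    LoopDigraphic a b :=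
  reduce b a hmono (∑ k ∈ Finset.range (n + 1), (partSum a' k - partSum a k)) a'
    le_rfl hmaj.1 hsum.symm hd
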